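/- arXiv:0901.1945 — 3 statements merged into one kernel-verified Lean document; each statement's English description precedes it below -/
import Mathlib

section
/- Let f : {t_0,...,t_ν} → ℝ be a function on a partition of [a,b] with mesh at most δ. If f = g₁ + h₁ = g₂ + h₂ where g₁, g₂ are L-Lipschitz and the discrete integrals ∑_{t_i ∈ [c,d)} h_j(t_i)(t_{i+1}-t_i) have absolute value at most ε for every subinterval [c,d) ⊆ [a,b] and j = 1,2, then |g₁(t) - g₂(t)| ≤ (2ε + 2L(b-a)η)/η + Lη for every t ∈ [a,b] and every 0 < η ≤ b - a with [t, t+η) ⊆ [a,b]. In particular the Lipschitz part of such a decomposition is unique up to an error that tends to 0 as ε, δ → 0. -/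
open Finset Set

/-- Discrete analogue of the uniqueness of the Cartier–Perrin decomposition:
two decompositions of a time series on a partition into an `L`-Lipschitz trend
plus an `ε`-fluctuating part have trends that agree up to
`(2ε + 2L(b-a)η)/η + Lη`. -/
theorem trend_uniqueness_discrete
    (ν : ℕ) (a b δ L ε : ℝ) (hL : 0 ≤ L)
    (t : Fin (ν + 1) → ℝ)
    (ht0 : t 0 = a) (htlast : t (Fin.last ν) = b)
    (hmono : StrictMono t)
    (hmesh : ∀ i : Fin ν, t i.succ - t i.castSucc ≤ δ)
    (f g₁ h₁ g₂ h₂ : ℝ → ℝ)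
    (hdec₁ : ∀ i : Fin (ν + 1), f (t i) = g₁ (t i) + h₁ (t i))
    (hdec₂ : ∀ i : Fin (ν + 1), f (t i) = g₂ (t i) + h₂ (t i))
    (hLip₁ : ∀ x ∈ Set.Icc a b, ∀ y ∈ Set.Icc a b, |g₁ x - g₁ y| ≤ L * |x - y|)
    (hLip₂ : ∀ x ∈ Set.Icc a b, ∀ y ∈ Set.Icc a b, |g₂ x - g₂ y| ≤ L * |x - y|)
    (hfluc₁ : ∀ c d : ℝ, a ≤ c → c ≤ d → d ≤ b →
      |∑ i : Fin ν, (if t i.castSucc ∈ Set.Ico c d then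
          h₁ (t i.castSucc) * (t i.succ - t i.castSucc) else 0)| ≤ ε)
    (hfluc₂ : ∀ c d : ℝ, a ≤ c → c ≤ d → d ≤ b →
      |∑ i : Fin ν, (if t i.castSucc ∈ Set.Ico c d then
          h₂ (t i.castSucc) * (t i.succ - t i.castSucc) else 0)| ≤ ε) :
    ∀ x ∈ Set.Icc a b, ∀ η : ℝ, 0 < η → η ≤ b - a → x + η ≤ b →
      |g₁ x - g₂ x| ≤ (2 * ε + 2 * L * (b - a) * η) / η + L * η := by
  intro x hx η hη hηba hxηb
  have hab : a ≤ b := by linarith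
  have hε : 0 ≤ ε := le_trans (abs_nonneg _) (hfluc₁ a a le_rfl le_rfl hab)
  have hν : 0 < ν := by
    rcases Nat.eq_zero_or_pos ν with h | h
    · exfalso
      subst h
      rw [show (Fin.last 0) = 0 from rfl, ht0] at htlast
      linarith
    · exact h
  set u : ℕ → ℝ := fun n => t ⟨min n ν, by omega⟩ with hu_def
  have humono : Monotone u := by
    intro m n hmn
    exact (hmono.monotone (by simp only [Fin.mk_le_mk]; omega))
  have hu0 : u 0 = a := by
    rw [hu_def]
    simp only
    rw [show (⟨min 0 ν, by omega⟩ : Fin (ν+1)) = 0 by ext; simp]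
    exact ht0
  have huν : u ν = b := by
    rw [hu_def]
    simp only
    rw [show (⟨min ν ν, by omega⟩ : Fin (ν+1)) = Fin.last ν by ext; simp]
    exact htlast
  have hcs : ∀ i : Fin ν, t i.castSucc = u i.val := by
    intro i
    rw [hu_def]
    congr 1
    ext
    simp only [Fin.coe_castSucc]
    have := i.isLt
    omega
  have hsucc : ∀ i : Fin ν, t i.succ = u (i.val + 1) := by
    intro i
    rw [hu_def]
    congr 1
    ext
    simp only [Fin.val_succ]
    have := i.isLt
    omega
  have hmemIcc : ∀ n, u n ∈ Set.Icc a b := by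
    intro n
    constructor
    · rw [← hu0]; exact humono (Nat.zero_le n)
    · rw [← huν]
      exact hmono.monotone (by simp only [Fin.mk_le_mk]; omega)
  have hex : ∃ n, a + η ≤ u n := ⟨ν, by rw [huν]; linarith⟩
  set k := Nat.find hex with hk_def
  have hk_spec : a + η ≤ u k := Nat.find_spec hex
  have hk_le : k ≤ ν := Nat.find_le (by rw [huν]; linarith)
  have hlt : ∀ n < k, u n < a + η := fun n hn => lt_of_not_ge (Nat.find_min hex hn)
  have hcond : ∀ n, n < ν → (u n ∈ Set.Ico a (a + η) ↔ n < k) := by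
    intro n _
    constructor
    · rintro ⟨h1, h2⟩
      by_contra hcon
      push_neg at hcon
      exact absurd (le_trans hk_spec (humono hcon)) (not_le.mpr h2)
    · intro h
      exact ⟨(hmemIcc n).1, hlt n h⟩
  set F : ℕ → ℝ := fun n => u (n + 1) - u n with hF_def
  have hFnn : ∀ n, 0 ≤ F n := fun n => sub_nonneg.mpr (humono (Nat.le_succ n))
  have hsum : ∀ w : ℝ → ℝ,
      (∑ i : Fin ν, (if t i.castSucc ∈ Set.Ico a (a + η) then
          w (t i.castSucc) * (t i.succ - t i.castSucc) else 0))
        = ∑ n ∈ Finset.range k, w (u n) * F n := by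
    intro w
    have h1 : ∀ i : Fin ν,
        (if t i.castSucc ∈ Set.Ico a (a + η) then
          w (t i.castSucc) * (t i.succ - t i.castSucc) else 0)
        = (fun n => if n < k then w (u n) * F n else 0) i.val := by
      intro i
      simp only
      rw [hcs i, hsucc i]
      simp only [hcond i.val i.isLt, hF_def]
    calc (∑ i : Fin ν, (if t i.castSucc ∈ Set.Ico a (a + η) then
          w (t i.castSucc) * (t i.succ - t i.castSucc) else 0))
        = ∑ i : Fin ν, (fun n => if n < k then w (u n) * F n else 0) i.val :=
          Finset.sum_congr rfl (fun i _ => h1 i)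
      _ = ∑ n ∈ Finset.range ν, (if n < k then w (u n) * F n else 0) :=
          Fin.sum_univ_eq_sum_range (fun n => if n < k then w (u n) * F n else 0) ν
      _ = ∑ n ∈ (Finset.range ν).filter (· < k), w (u n) * F n := by
          rw [Finset.sum_filter]
      _ = ∑ n ∈ Finset.range k, w (u n) * F n := by
          congr 1
          ext n
          simp only [Finset.mem_filter, Finset.mem_range]
          omega
  set M : ℝ := ∑ n ∈ Finset.range k, F n with hM_def
  have hM : M = u k - a := by
    rw [hM_def, hF_def]
    rw [Finset.sum_range_sub u k, hu0]
  have hMη : η ≤ M := by rw [hM]; linarith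
  have hMpos : 0 < M := lt_of_lt_of_le hη hMη
  have hS1 := hfluc₁ a (a + η) le_rfl (by linarith) (by linarith)
  have hS2 := hfluc₂ a (a + η) le_rfl (by linarith) (by linarith)
  rw [hsum h₁] at hS1
  rw [hsum h₂] at hS2
  have hdiff : ∑ n ∈ Finset.range k, (g₁ (u n) - g₂ (u n)) * F n
      = (∑ n ∈ Finset.range k, h₂ (u n) * F n)
        - ∑ n ∈ Finset.range k, h₁ (u n) * F n := by
    rw [← Finset.sum_sub_distrib]
    apply Finset.sum_congr rfl
    intro n _
    have hun : u n = t ⟨min n ν, by omega⟩ := rfl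
    have hd1 := hdec₁ ⟨min n ν, by omega⟩
    have hd2 := hdec₂ ⟨min n ν, by omega⟩
    rw [← hun] at hd1 hd2
    have hgh : g₁ (u n) - g₂ (u n) = h₂ (u n) - h₁ (u n) := by linarith
    rw [hgh]; ring
  have habs : |∑ n ∈ Finset.range k, (g₁ (u n) - g₂ (u n)) * F n| ≤ 2 * ε := by
    rw [hdiff]
    calc |(∑ n ∈ Finset.range k, h₂ (u n) * F n)
        - ∑ n ∈ Finset.range k, h₁ (u n) * F n|
        ≤ |∑ n ∈ Finset.range k, h₂ (u n) * F n|
          + |∑ n ∈ Finset.range k, h₁ (u n) * F n| := by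
          rw [sub_eq_add_neg]
          exact (abs_add_le _ _).trans_eq (by rw [abs_neg])
      _ ≤ 2 * ε := by linarith
  have hGx : ∀ n, n < k → |(g₁ x - g₂ x) - (g₁ (u n) - g₂ (u n))| ≤ 2 * L * (b - a) := by
    intro n _
    have h1 := hLip₁ x hx (u n) (hmemIcc n)
    have h2 := hLip₂ x hx (u n) (hmemIcc n)
    have hub : |x - u n| ≤ b - a := by
      rw [abs_le]
      constructor
      · linarith [(hmemIcc n).2, hx.1]
      · linarith [(hmemIcc n).1, hx.2]
    calc |(g₁ x - g₂ x) - (g₁ (u n) - g₂ (u n))|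
        = |(g₁ x - g₁ (u n)) - (g₂ x - g₂ (u n))| := by congr 1; ring
      _ ≤ |g₁ x - g₁ (u n)| + |g₂ x - g₂ (u n)| := by
          rw [sub_eq_add_neg]
          exact (abs_add_le _ _).trans_eq (by rw [abs_neg])
      _ ≤ L * |x - u n| + L * |x - u n| := add_le_add h1 h2
      _ ≤ 2 * L * (b - a) := by
          have := mul_le_mul_of_nonneg_left hub hL
          linarith
  have hmain : |g₁ x - g₂ x| * M ≤ 2 * ε + 2 * L * (b - a) * M := by
    have h1 : (g₁ x - g₂ x) * M
        = (∑ n ∈ Finset.range k, (g₁ (u n) - g₂ (u n)) * F n)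
          + ∑ n ∈ Finset.range k, ((g₁ x - g₂ x) - (g₁ (u n) - g₂ (u n))) * F n := by
      rw [← Finset.sum_add_distrib, hM_def, Finset.mul_sum]
      apply Finset.sum_congr rfl
      intro n _
      ring
    have h2 : |∑ n ∈ Finset.range k, ((g₁ x - g₂ x) - (g₁ (u n) - g₂ (u n))) * F n|
        ≤ 2 * L * (b - a) * M := by
      calc |∑ n ∈ Finset.range k, ((g₁ x - g₂ x) - (g₁ (u n) - g₂ (u n))) * F n|
          ≤ ∑ n ∈ Finset.range k, |((g₁ x - g₂ x) - (g₁ (u n) - g₂ (u n))) * F n| :=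
            Finset.abs_sum_le_sum_abs _ _
        _ ≤ ∑ n ∈ Finset.range k, 2 * L * (b - a) * F n := by
            apply Finset.sum_le_sum
            intro n hn
            rw [abs_mul, abs_of_nonneg (hFnn n)]
            exact mul_le_mul_of_nonneg_right (hGx n (Finset.mem_range.mp hn)) (hFnn n)
        _ = 2 * L * (b - a) * M := by rw [hM_def, Finset.mul_sum]
    calc |g₁ x - g₂ x| * M = |(g₁ x - g₂ x) * M| := by
          rw [abs_mul, abs_of_nonneg hMpos.le]
      _ ≤ |∑ n ∈ Finset.range k, (g₁ (u n) - g₂ (u n)) * F n|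
          + |∑ n ∈ Finset.range k, ((g₁ x - g₂ x) - (g₁ (u n) - g₂ (u n))) * F n| := by
          rw [h1]; exact abs_add_le _ _
      _ ≤ 2 * ε + 2 * L * (b - a) * M := add_le_add habs h2
  have hfin : |g₁ x - g₂ x| * η ≤ 2 * ε + 2 * L * (b - a) * η := by
    by_cases hc : 2 * L * (b - a) ≤ |g₁ x - g₂ x|
    · have hp : 0 ≤ (|g₁ x - g₂ x| - 2 * L * (b - a)) * (M - η) :=
        mul_nonneg (by linarith) (by linarith)
      nlinarith [hp, hmain]
    · push_neg at hc
      have := mul_le_mul_of_nonneg_right hc.le hη.le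
      linarith
  have h1 : |g₁ x - g₂ x| ≤ (2 * ε + 2 * L * (b - a) * η) / η := (le_div_iff₀ hη).mpr hfin
  have h2 : 0 ≤ L * η := mul_nonneg hL hη.le
  linarith
end

section
/- Let h : [0,T] → ℝ be integrable with |∫_c^d h(s) ds| ≤ ε for all 0 ≤ c ≤ d ≤ T (h is ε-fluctuating). Then its k-fold iterated integral H_k(t) = ∫₀^t (t-s)^{k-1} h(s) ds / (k-1)! satisfies |H_k(t)| ≤ ε t^{k-1}/(k-1)! for all t ∈ [0,T] and k ≥ 1. -/
open MeasureTheory intervalIntegral Set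

lemma my_swap (t : ℝ) (ht : 0 ≤ t) (h g : ℝ → ℝ)
    (hint : IntegrableOn h (Set.Icc 0 t)) (hg : Continuous g) :
    ∫ s in (0:ℝ)..t, h s * (∫ u in s..t, g u)
      = ∫ u in (0:ℝ)..t, (∫ s in (0:ℝ)..u, h s) * g u := by
  have hintI : IntegrableOn h (Set.Ioc 0 t) := hint.mono_set Ioc_subset_Icc_self
  have hgI : IntegrableOn g (Set.Ioc 0 t) :=
    ((hg.continuousOn : ContinuousOn g (Set.Icc 0 t)).integrableOn_Icc).mono_set
      Ioc_subset_Icc_self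
  set μ := volume.restrict (Set.Ioc (0:ℝ) t) with hμ
  have hF : Integrable (fun p : ℝ × ℝ => {q : ℝ × ℝ | q.1 ≤ q.2}.indicator
      (fun q : ℝ × ℝ => h q.1 * g q.2) p) (μ.prod μ) :=
    (hintI.mul_prod hgI).indicator (measurableSet_le measurable_fst measurable_snd)
  have key := MeasureTheory.integral_integral_swap (μ := μ) (ν := μ)
    (f := fun s u => {q : ℝ × ℝ | q.1 ≤ q.2}.indicator (fun q : ℝ × ℝ => h q.1 * g q.2) (s, u))
    hF
  have hL : (∫ s, ∫ u, {q : ℝ × ℝ | q.1 ≤ q.2}.indicator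
      (fun q : ℝ × ℝ => h q.1 * g q.2) (s, u) ∂μ ∂μ)
      = ∫ s in (0:ℝ)..t, h s * (∫ u in s..t, g u) := by
    rw [intervalIntegral.integral_of_le ht, hμ]
    apply setIntegral_congr_fun measurableSet_Ioc
    intro s hs
    have h1 : (fun u => {q : ℝ × ℝ | q.1 ≤ q.2}.indicator
        (fun q : ℝ × ℝ => h q.1 * g q.2) (s, u))
        = (Set.Ici s).indicator (fun u => h s * g u) := by
      ext u
      by_cases hsu : s ≤ u
      · rw [Set.indicator_of_mem (by exact hsu : (s,u) ∈ {q : ℝ × ℝ | q.1 ≤ q.2}),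
          Set.indicator_of_mem (by exact hsu)]
      · rw [Set.indicator_of_notMem (by exact hsu), Set.indicator_of_notMem (by exact hsu)]
    have hset : Set.Ioc (0:ℝ) t ∩ Set.Ici s = Set.Icc s t := by
      ext x
      simp only [mem_inter_iff, mem_Ioc, mem_Ici, mem_Icc]
      constructor
      · rintro ⟨⟨_, h2⟩, h3⟩; exact ⟨h3, h2⟩
      · rintro ⟨h1, h2⟩; exact ⟨⟨lt_of_lt_of_le hs.1 h1, h2⟩, h1⟩
    dsimp only
    rw [h1, setIntegral_indicator measurableSet_Ici, hset,
      MeasureTheory.integral_Icc_eq_integral_Ioc, ← intervalIntegral.integral_of_le hs.2,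
      intervalIntegral.integral_const_mul]
  have hR : (∫ u, ∫ s, {q : ℝ × ℝ | q.1 ≤ q.2}.indicator
      (fun q : ℝ × ℝ => h q.1 * g q.2) (s, u) ∂μ ∂μ)
      = ∫ u in (0:ℝ)..t, (∫ s in (0:ℝ)..u, h s) * g u := by
    rw [intervalIntegral.integral_of_le ht, hμ]
    apply setIntegral_congr_fun measurableSet_Ioc
    intro u hu
    have h1 : (fun s => {q : ℝ × ℝ | q.1 ≤ q.2}.indicator
        (fun q : ℝ × ℝ => h q.1 * g q.2) (s, u))
        = (Set.Iic u).indicator (fun s => h s * g u) := by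
      ext s
      by_cases hsu : s ≤ u
      · rw [Set.indicator_of_mem (by exact hsu : (s,u) ∈ {q : ℝ × ℝ | q.1 ≤ q.2}),
          Set.indicator_of_mem (by exact hsu)]
      · rw [Set.indicator_of_notMem (by exact hsu), Set.indicator_of_notMem (by exact hsu)]
    have hset : Set.Ioc (0:ℝ) t ∩ Set.Iic u = Set.Ioc 0 u := by
      ext x
      simp only [mem_inter_iff, mem_Ioc, mem_Iic]
      constructor
      · rintro ⟨⟨h1, _⟩, h3⟩; exact ⟨h1, h3⟩
      · rintro ⟨h1, h2⟩; exact ⟨⟨h1, le_trans h2 hu.2⟩, h2⟩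
    dsimp only
    rw [h1, setIntegral_indicator measurableSet_Iic, hset,
      ← intervalIntegral.integral_of_le hu.1.le, intervalIntegral.integral_mul_const]
  rw [← hL, ← hR, key]

/-- Iterated integration does not amplify a quickly fluctuating function:
if all integrals of `h` over subintervals of `[0,T]` are bounded by `ε`, then
the `k`-fold iterated integral `H_k(t) = ∫₀^t (t-s)^{k-1} h(s) ds/(k-1)!`
satisfies `|H_k(t)| ≤ ε t^{k-1}/(k-1)!`. -/
theorem iterated_integral_of_fluctuating_small
    (T ε : ℝ) (hT : 0 ≤ T) (h : ℝ → ℝ)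
    (hint : IntegrableOn h (Set.Icc 0 T))
    (hfl : ∀ c d : ℝ, 0 ≤ c → c ≤ d → d ≤ T → |∫ s in c..d, h s| ≤ ε)
    (k : ℕ) (hk : 1 ≤ k) (t : ℝ) (ht : t ∈ Set.Icc (0:ℝ) T) :
    |∫ s in (0:ℝ)..t, (t - s) ^ (k - 1) * h s / (Nat.factorial (k - 1))|
      ≤ ε * t ^ (k - 1) / (Nat.factorial (k - 1)) := by
  obtain ⟨ht0, htT⟩ := ht
  have hfac : (0:ℝ) < (Nat.factorial (k-1) : ℝ) := by
    exact_mod_cast Nat.factorial_pos (k-1)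
  -- reduce to the key inequality without factorials
  have hkey : |∫ s in (0:ℝ)..t, (t - s) ^ (k - 1) * h s| ≤ ε * t ^ (k - 1) := by
    have hintt : IntegrableOn h (Set.Icc 0 t) :=
      hint.mono_set (Set.Icc_subset_Icc le_rfl htT)
    obtain ⟨n, rfl⟩ : ∃ n, k = n + 1 := ⟨k - 1, (Nat.succ_pred_eq_of_pos hk).symm⟩
    simp only [Nat.add_sub_cancel]
    rcases Nat.eq_zero_or_pos n with hn | hn
    · subst hn
      simpa using hfl 0 t le_rfl ht0 htT
    · obtain ⟨m, rfl⟩ : ∃ m, n = m + 1 := ⟨n - 1, (Nat.succ_pred_eq_of_pos hn).symm⟩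
      have hg : Continuous (fun u : ℝ => (t - u) ^ m) :=
        (continuous_const.sub continuous_id).pow m
      have hker : ∀ s : ℝ, (∫ u in s..t, (t - u) ^ m) = (t - s) ^ (m + 1) / (m + 1) := by
        intro s
        rw [intervalIntegral.integral_comp_sub_left (fun x => x ^ m) t]
        simp [integral_pow]
      have hid : (∫ s in (0:ℝ)..t, (t - s) ^ (m + 1) * h s)
          = ((m:ℝ) + 1) * ∫ u in (0:ℝ)..t, (∫ s in (0:ℝ)..u, h s) * (t - u) ^ m := by
        rw [← my_swap t ht0 h (fun u => (t - u) ^ m) hintt hg,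
          ← intervalIntegral.integral_const_mul]
        apply intervalIntegral.integral_congr
        intro s _
        dsimp only
        rw [hker s]
        field_simp
      have hε : 0 ≤ ε := by
        have := hfl 0 0 le_rfl le_rfl hT
        simpa using this
      have HC : ContinuousOn (fun u => ∫ s in (0:ℝ)..u, h s) (Set.Icc 0 t) := by
        have := intervalIntegral.continuousOn_primitive_interval
          (a := 0) (b := t) (μ := volume) (f := h) (by rwa [Set.uIcc_of_le ht0])
        rwa [Set.uIcc_of_le ht0] at this
      have hbound : |∫ u in (0:ℝ)..t, (∫ s in (0:ℝ)..u, h s) * (t - u) ^ m|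
          ≤ ε * (t ^ (m + 1) / (m + 1)) := by
        have h1 : |∫ u in (0:ℝ)..t, (∫ s in (0:ℝ)..u, h s) * (t - u) ^ m|
            ≤ ∫ u in (0:ℝ)..t, |(∫ s in (0:ℝ)..u, h s) * (t - u) ^ m| :=
          intervalIntegral.abs_integral_le_integral_abs ht0
        have h2 : (∫ u in (0:ℝ)..t, |(∫ s in (0:ℝ)..u, h s) * (t - u) ^ m|)
            ≤ ∫ u in (0:ℝ)..t, ε * (t - u) ^ m := by
          apply intervalIntegral.integral_mono_on ht0
          · apply ContinuousOn.intervalIntegrable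
            rw [Set.uIcc_of_le ht0]
            exact (HC.mul hg.continuousOn).abs
          · exact (continuous_const.mul hg).intervalIntegrable 0 t
          · intro u hu
            rw [abs_mul, abs_pow, abs_of_nonneg (by linarith [hu.2] : (0:ℝ) ≤ t - u)]
            have hHu : |∫ s in (0:ℝ)..u, h s| ≤ ε :=
              hfl 0 u le_rfl hu.1 (hu.2.trans htT)
            exact mul_le_mul_of_nonneg_right hHu (pow_nonneg (by linarith [hu.2]) m)
        have h3 : (∫ u in (0:ℝ)..t, ε * (t - u) ^ m) = ε * (t ^ (m + 1) / (m + 1)) := by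
          rw [intervalIntegral.integral_const_mul, hker 0]
          ring_nf
        calc |∫ u in (0:ℝ)..t, (∫ s in (0:ℝ)..u, h s) * (t - u) ^ m|
            ≤ ∫ u in (0:ℝ)..t, |(∫ s in (0:ℝ)..u, h s) * (t - u) ^ m| := h1
          _ ≤ ∫ u in (0:ℝ)..t, ε * (t - u) ^ m := h2
          _ = ε * (t ^ (m + 1) / (m + 1)) := h3
      rw [hid, abs_mul, abs_of_nonneg (by positivity : (0:ℝ) ≤ (m:ℝ) + 1)]
      calc ((m:ℝ) + 1) * |∫ u in (0:ℝ)..t, (∫ s in (0:ℝ)..u, h s) * (t - u) ^ m|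
          ≤ ((m:ℝ) + 1) * (ε * (t ^ (m + 1) / (m + 1))) :=
            mul_le_mul_of_nonneg_left hbound (by positivity)
        _ = ε * t ^ (m + 1) := by field_simp
  calc |∫ s in (0:ℝ)..t, (t - s) ^ (k - 1) * h s / (Nat.factorial (k - 1))|
      = |∫ s in (0:ℝ)..t, (t - s) ^ (k - 1) * h s| / (Nat.factorial (k - 1)) := by
        rw [intervalIntegral.integral_div, abs_div, abs_of_pos hfac]
    _ ≤ ε * t ^ (k - 1) / (Nat.factorial (k - 1)) := by
        gcongr
end

section
/- Let f : [0,T] → ℝ with f = g + h, g three times continuously differentiable with |g'''| ≤ K, and h ε-fluctuating. Define the derivative estimator D(t) = (3/(2η³)) ∫_{-η}^{η} s f(t+s) ds for η ≤ t ≤ T-η. Then |D(t) - g'(t)| ≤ C₁ K η² + C₂ ε/η² for absolute constants C₁, C₂. -/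
open MeasureTheory intervalIntegral Set

lemma aux_weighted (η ε : ℝ) (hη : 0 < η) (ψ : ℝ → ℝ)
    (hψ : IntegrableOn ψ (Set.Ioc 0 η))
    (hb : ∀ u ∈ Set.Icc (0:ℝ) η, |∫ s in Set.Ioc u η, ψ s| ≤ ε) :
    |∫ s in Set.Ioc (0:ℝ) η, s * ψ s| ≤ ε * η := by
  set μ := volume.restrict (Set.Ioc (0:ℝ) η) with hμ
  set F : ℝ → ℝ → ℝ := fun s u => if u ≤ s then ψ s else 0 with hF
  have hμfin : μ Set.univ < ⊤ := by
    rw [hμ, Measure.restrict_apply_univ, Real.volume_Ioc]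
    exact ENNReal.ofReal_lt_top
  -- integrability of the uncurried function
  have hind : Function.uncurry F = Set.indicator {p : ℝ × ℝ | p.2 ≤ p.1} (fun p => ψ p.1) := by
    funext p
    by_cases hp : p.2 ≤ p.1 <;> simp [Function.uncurry, hF, Set.indicator, hp]
  have hintF : Integrable (Function.uncurry F) (μ.prod μ) := by
    rw [hind]
    have hone : Integrable (fun _ : ℝ => (1:ℝ)) μ := by
      rw [hμ]
      exact integrableOn_const (by rw [Real.volume_Ioc]; exact ENNReal.ofReal_ne_top)
    have hψ' : Integrable ψ μ := by rw [hμ]; exact hψ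
    have h1 : Integrable (fun p : ℝ × ℝ => ψ p.1 * (1:ℝ)) (μ.prod μ) := hψ'.mul_prod hone
    simp only [mul_one] at h1
    exact h1.indicator (measurableSet_le measurable_snd measurable_fst)
  -- rewrite the integrand
  have step1 : ∫ s in Set.Ioc (0:ℝ) η, s * ψ s = ∫ s, (∫ u, F s u ∂μ) ∂μ := by
    apply setIntegral_congr_fun measurableSet_Ioc
    intro s hs
    show s * ψ s = ∫ u, F s u ∂μ
    have : (fun u => F s u) = Set.indicator (Set.Iic s) (fun _ => ψ s) := by
      funext u
      by_cases hu : u ≤ s <;> simp [hF, Set.indicator, hu]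
    rw [hμ, this, setIntegral_indicator measurableSet_Iic]
    have hset : Set.Ioc (0:ℝ) η ∩ Set.Iic s = Set.Ioc 0 s := by
      ext x
      simp only [Set.mem_inter_iff, Set.mem_Ioc, Set.mem_Iic]
      constructor
      · rintro ⟨⟨h1, _⟩, h3⟩; exact ⟨h1, h3⟩
      · rintro ⟨h1, h2⟩; exact ⟨⟨h1, h2.trans hs.2⟩, h2⟩
    rw [hset, setIntegral_const, measureReal_def, Real.volume_Ioc, sub_zero,
      ENNReal.toReal_ofReal hs.1.le, smul_eq_mul]
  have swap : ∫ s, (∫ u, F s u ∂μ) ∂μ = ∫ u, (∫ s, F s u ∂μ) ∂μ :=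
    integral_integral_swap hintF
  have inner_eq : ∀ u ∈ Set.Ioc (0:ℝ) η, (∫ s, F s u ∂μ) = ∫ s in Set.Ioc u η, ψ s := by
    intro u hu
    have : (fun s => F s u) = Set.indicator (Set.Ici u) ψ := by
      funext s
      by_cases hsu : u ≤ s <;> simp [hF, Set.indicator, hsu]
    rw [hμ, this, setIntegral_indicator measurableSet_Ici]
    have hset : Set.Ioc (0:ℝ) η ∩ Set.Ici u = Set.Icc u η := by
      ext x
      simp only [Set.mem_inter_iff, Set.mem_Ioc, Set.mem_Icc, Set.mem_Ici]
      constructor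
      · rintro ⟨⟨_, h2⟩, h3⟩; exact ⟨h3, h2⟩
      · rintro ⟨h1, h2⟩; exact ⟨⟨lt_of_lt_of_le hu.1 h1, h2⟩, h1⟩
    rw [hset, integral_Icc_eq_integral_Ioc]
  rw [step1, swap]
  have hbound : ∀ u ∈ Set.Ioc (0:ℝ) η, ‖∫ s, F s u ∂μ‖ ≤ ε := by
    intro u hu
    rw [inner_eq u hu, Real.norm_eq_abs]
    exact hb u ⟨hu.1.le, hu.2⟩
  calc |∫ u, (∫ s, F s u ∂μ) ∂μ| = ‖∫ u in Set.Ioc (0:ℝ) η, (∫ s, F s u ∂μ) ∂volume‖ := rfl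
    _ ≤ ε * (volume (Set.Ioc (0:ℝ) η)).toReal := by
        apply norm_setIntegral_le_of_norm_le_const _ hbound
        rw [Real.volume_Ioc]; exact ENNReal.ofReal_lt_top
    _ = ε * η := by rw [Real.volume_Ioc, sub_zero, ENNReal.toReal_ofReal hη.le]

/-- Algebraic numerical differentiation of the trend: there are absolute
constants `C₁, C₂` such that, whenever `f = g + h` on `[0,T]` with `g` three
times continuously differentiable, `|g'''| ≤ K`, and `h` ε-fluctuating, the
estimator `D(t) = (3/(2η³)) ∫_{-η}^{η} s f(t+s) ds` satisfies
`|D(t) - g'(t)| ≤ C₁ K η² + C₂ ε/η²`. -/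
theorem derivative_estimator_error :
    ∃ C₁ C₂ : ℝ, 0 < C₁ ∧ 0 < C₂ ∧
      ∀ (T K ε η : ℝ) (f g h : ℝ → ℝ),
        0 < T → 0 < η → 0 ≤ K → 0 ≤ ε →
        ContDiff ℝ 3 g →
        (∀ x ∈ Set.Icc (0:ℝ) T, |iteratedDeriv 3 g x| ≤ K) →
        (∀ x ∈ Set.Icc (0:ℝ) T, f x = g x + h x) →
        IntegrableOn h (Set.Icc 0 T) →
        (∀ c d : ℝ, 0 ≤ c → c ≤ d → d ≤ T → |∫ s in c..d, h s| ≤ ε) →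
        ∀ t : ℝ, η ≤ t → t ≤ T - η →
          |(3 / (2 * η ^ 3)) * (∫ s in (-η)..η, s * f (t + s)) - deriv g t|
            ≤ C₁ * K * η ^ 2 + C₂ * ε / η ^ 2 := by
  refine ⟨3, 3, by norm_num, by norm_num, ?_⟩
  intro T K ε η f g h hT hη hK hε hg hg3 hfgh hInt hflu t ht1 ht2
  have hg_d : Differentiable ℝ g := hg.differentiable (by norm_num)
  have hg1 : ContDiff ℝ 2 (deriv g) := by
    rw [show (3 : WithTop ℕ∞) = 2 + 1 from rfl, contDiff_succ_iff_deriv] at hg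
    exact hg.2.2
  have hg1_d : Differentiable ℝ (deriv g) := hg1.differentiable (by norm_num)
  have hg2 : ContDiff ℝ 1 (deriv (deriv g)) := by
    rw [show (2 : WithTop ℕ∞) = 1 + 1 from rfl, contDiff_succ_iff_deriv] at hg1
    exact hg1.2.2
  have hg2_d : Differentiable ℝ (deriv (deriv g)) := hg2.differentiable (by norm_num)
  set g1 := deriv g with hg1def
  set g2 := deriv g1 with hg2def
  set g3 := deriv g2 with hg3def
  have hiter : iteratedDeriv 3 g = g3 := by
    rw [show (3:ℕ) = 2 + 1 from rfl, iteratedDeriv_succ,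
      show (2:ℕ) = 1 + 1 from rfl, iteratedDeriv_succ, iteratedDeriv_one]
  have hmem : ∀ s ∈ Set.Icc (-η) η, t + s ∈ Set.Icc (0:ℝ) T := by
    intro s hs
    constructor
    · linarith [hs.1]
    · linarith [hs.2]
  set E2 : ℝ → ℝ := fun s => g2 (t + s) - g2 t with hE2def
  set E1 : ℝ → ℝ := fun s => g1 (t + s) - g1 t - g2 t * s with hE1def
  set E : ℝ → ℝ := fun s => g (t + s) - g t - g1 t * s - g2 t * (s ^ 2 / 2) with hEdef
  have hcomp : ∀ (φ : ℝ → ℝ), Differentiable ℝ φ → ∀ s : ℝ,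
      HasDerivAt (fun x => φ (t + x)) (deriv φ (t + s)) s := by
    intro φ hφ s
    have h1 : HasDerivAt (fun x : ℝ => t + x) 1 s := (hasDerivAt_id s).const_add t
    have := (hφ (t + s)).hasDerivAt.comp s h1
    simpa [Function.comp_def] using this
  have hE2deriv : ∀ s : ℝ, HasDerivAt E2 (g3 (t + s)) s := by
    intro s
    exact ((hcomp g2 hg2_d s).sub_const (g2 t))
  have hE1deriv : ∀ s : ℝ, HasDerivAt E1 (E2 s) s := by
    intro s
    have h1 := (hcomp g1 hg1_d s).sub_const (g1 t)
    have h2 : HasDerivAt (fun x : ℝ => g2 t * x) (g2 t) s := by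
      simpa using (hasDerivAt_id s).const_mul (g2 t)
    exact h1.sub h2
  have hEderiv : ∀ s : ℝ, HasDerivAt E (E1 s) s := by
    intro s
    have h1 := (hcomp g hg_d s).sub_const (g t)
    have h2 : HasDerivAt (fun x : ℝ => g1 t * x) (g1 t) s := by
      simpa using (hasDerivAt_id s).const_mul (g1 t)
    have h3 : HasDerivAt (fun x : ℝ => g2 t * (x ^ 2 / 2)) (g2 t * s) s := by
      have := ((hasDerivAt_pow 2 s).div_const 2).const_mul (g2 t)
      simpa [mul_comm] using this
    exact (h1.sub h2).sub h3
  -- MVT chain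
  have habs : ∀ s ∈ Set.Icc (-η) η, |s| ≤ η := fun s hs => abs_le.2 ⟨hs.1, hs.2⟩
  have hIccmem : (0:ℝ) ∈ Set.Icc (-η) η := ⟨by linarith, hη.le⟩
  have hconv : Convex ℝ (Set.Icc (-η) η) := convex_Icc _ _
  have hE2bound : ∀ s ∈ Set.Icc (-η) η, |E2 s| ≤ K * η := by
    intro s hs
    have h0 : E2 0 = 0 := by simp [hE2def]
    have := hconv.norm_image_sub_le_of_norm_hasDerivWithin_le
      (f := E2) (f' := fun x => g3 (t + x)) (C := K)
      (fun x _ => (hE2deriv x).hasDerivWithinAt)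
      (fun x hx => by
        rw [Real.norm_eq_abs]
        have := hg3 (t + x) (hmem x hx)
        rwa [hiter] at this) hIccmem hs
    rw [h0] at this
    simp only [sub_zero, Real.norm_eq_abs] at this
    calc |E2 s| ≤ K * |s| := this
      _ ≤ K * η := by nlinarith [habs s hs, abs_nonneg s, mul_nonneg hK hη.le]
  have hE1bound : ∀ s ∈ Set.Icc (-η) η, |E1 s| ≤ K * η * η := by
    intro s hs
    have h0 : E1 0 = 0 := by simp [hE1def]
    have := hconv.norm_image_sub_le_of_norm_hasDerivWithin_le
      (f := E1) (f' := E2) (C := K * η)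
      (fun x _ => (hE1deriv x).hasDerivWithinAt)
      (fun x hx => by rw [Real.norm_eq_abs]; exact hE2bound x hx) hIccmem hs
    rw [h0] at this
    simp only [sub_zero, Real.norm_eq_abs] at this
    calc |E1 s| ≤ K * η * |s| := this
      _ ≤ K * η * η := by nlinarith [habs s hs, abs_nonneg s, mul_nonneg hK hη.le]
  have hEbound : ∀ s ∈ Set.Icc (-η) η, |E s| ≤ K * η ^ 3 := by
    intro s hs
    have h0 : E 0 = 0 := by simp [hEdef]
    have := hconv.norm_image_sub_le_of_norm_hasDerivWithin_le
      (f := E) (f' := E1) (C := K * η * η)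
      (fun x _ => (hEderiv x).hasDerivWithinAt)
      (fun x hx => by rw [Real.norm_eq_abs]; exact hE1bound x hx) hIccmem hs
    rw [h0] at this
    simp only [sub_zero, Real.norm_eq_abs] at this
    calc |E s| ≤ K * η * η * |s| := this
      _ ≤ K * η ^ 3 := by nlinarith [habs s hs, abs_nonneg s, mul_nonneg (mul_nonneg hK hη.le) hη.le]
  -- integrability facts
  have huIcc : Set.uIcc (-η) η = Set.Icc (-η) η := uIcc_of_le (by linarith)
  have hcont_tg : Continuous fun s => g (t + s) :=
    hg.continuous.comp (continuous_const.add continuous_id)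
  have hcontE : Continuous E := by
    rw [hEdef]
    exact ((hcont_tg.sub continuous_const).sub (continuous_const.mul continuous_id)).sub
      (continuous_const.mul ((continuous_pow 2).div_const 2))
  have h0 : IntervalIntegrable h volume (t - η) (t + η) := by
    apply MeasureTheory.IntegrableOn.intervalIntegrable
    apply hInt.mono_set
    rw [uIcc_of_le (by linarith)]
    exact Set.Icc_subset_Icc (by linarith) (by linarith)
  have h1 : IntervalIntegrable (fun s => h (t + s)) volume (-η) η := by
    have := h0.comp_add_left t
    simpa using this
  have hih : IntervalIntegrable (fun s => s * h (t + s)) volume (-η) η :=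
    h1.continuousOn_mul continuousOn_id
  have hig : IntervalIntegrable (fun s => s * g (t + s)) volume (-η) η :=
    (continuous_id.mul hcont_tg).intervalIntegrable _ _
  have hiE : IntervalIntegrable (fun s => s * E s) volume (-η) η :=
    (continuous_id.mul hcontE).intervalIntegrable _ _
  have hiP : IntervalIntegrable (fun s => g t * s + g1 t * s ^ 2 + g2 t / 2 * s ^ 3)
      volume (-η) η := by
    apply Continuous.intervalIntegrable
    fun_prop
  have split1 : (∫ s in (-η)..η, s * f (t + s))
      = (∫ s in (-η)..η, s * g (t + s)) + ∫ s in (-η)..η, s * h (t + s) := by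
    rw [← intervalIntegral.integral_add hig hih]
    apply intervalIntegral.integral_congr
    intro s hs
    rw [huIcc] at hs
    show s * f (t + s) = s * g (t + s) + s * h (t + s)
    rw [hfgh (t + s) (hmem s hs)]
    ring
  have split2 : (∫ s in (-η)..η, s * g (t + s))
      = (∫ s in (-η)..η, (g t * s + g1 t * s ^ 2 + g2 t / 2 * s ^ 3))
        + ∫ s in (-η)..η, s * E s := by
    rw [← intervalIntegral.integral_add hiP hiE]
    apply intervalIntegral.integral_congr
    intro s _
    show s * g (t + s) = g t * s + g1 t * s ^ 2 + g2 t / 2 * s ^ 3 + s * E s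
    simp only [hEdef]
    ring
  have IP : (∫ s in (-η)..η, (g t * s + g1 t * s ^ 2 + g2 t / 2 * s ^ 3))
      = g1 t * (2 / 3 * η ^ 3) := by
    rw [intervalIntegral.integral_add (by apply Continuous.intervalIntegrable; fun_prop)
        (by apply Continuous.intervalIntegrable; fun_prop),
      intervalIntegral.integral_add (by apply Continuous.intervalIntegrable; fun_prop)
        (by apply Continuous.intervalIntegrable; fun_prop),
      intervalIntegral.integral_const_mul, intervalIntegral.integral_const_mul,
      intervalIntegral.integral_const_mul, integral_id, integral_pow, integral_pow]
    push_cast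
    ring
  have IEbound : |∫ s in (-η)..η, s * E s| ≤ K * η ^ 4 * (2 * η) := by
    have hb : ∀ x ∈ Set.uIoc (-η) η, ‖x * E x‖ ≤ K * η ^ 4 := by
      intro x hx
      rw [Set.uIoc_of_le (by linarith)] at hx
      have hx' : x ∈ Set.Icc (-η) η := ⟨hx.1.le, hx.2⟩
      rw [Real.norm_eq_abs, abs_mul]
      calc |x| * |E x| ≤ η * (K * η ^ 3) :=
            mul_le_mul (habs x hx') (hEbound x hx') (abs_nonneg _) hη.le
        _ = K * η ^ 4 := by ring
    have := intervalIntegral.norm_integral_le_of_norm_le_const hb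
    rwa [Real.norm_eq_abs, show |η - -η| = 2 * η by
      rw [abs_of_pos (by linarith)]; ring] at this
  have Ihsplit : (∫ s in (-η)..η, s * h (t + s))
      = (∫ s in (-η)..(0:ℝ), s * h (t + s)) + ∫ s in (0:ℝ)..η, s * h (t + s) := by
    refine (intervalIntegral.integral_add_adjacent_intervals (hih.mono_set ?_)
      (hih.mono_set ?_)).symm
    · rw [huIcc, uIcc_of_le (by linarith : -η ≤ (0:ℝ))]
      exact Set.Icc_subset_Icc le_rfl hη.le
    · rw [huIcc, uIcc_of_le hη.le]
      exact Set.Icc_subset_Icc (by linarith) le_rfl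
  have hpos : |∫ s in (0:ℝ)..η, s * h (t + s)| ≤ ε * η := by
    rw [intervalIntegral.integral_of_le hη.le]
    apply aux_weighted η ε hη
    · refine (h1.mono_set ?_).1
      rw [huIcc, uIcc_of_le hη.le]
      exact Set.Icc_subset_Icc (by linarith) le_rfl
    · intro u hu
      rw [← intervalIntegral.integral_of_le hu.2, intervalIntegral.integral_comp_add_left h t]
      exact hflu (t + u) (t + η) (by linarith [hu.1]) (by linarith [hu.2]) (by linarith)
  have hneg : |∫ s in (-η)..(0:ℝ), s * h (t + s)| ≤ ε * η := by
    have e1 := intervalIntegral.integral_comp_neg (a := (0:ℝ)) (b := η)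
      (fun s => s * h (t + s))
    simp only [neg_zero] at e1
    rw [← e1]
    have e2 : (∫ x in (0:ℝ)..η, -x * h (t + -x)) = - ∫ x in (0:ℝ)..η, x * h (t - x) := by
      rw [← intervalIntegral.integral_neg]
      apply intervalIntegral.integral_congr
      intro x _
      show -x * h (t + -x) = -(x * h (t - x))
      rw [← sub_eq_add_neg]
      ring
    rw [e2, abs_neg, intervalIntegral.integral_of_le hη.le]
    apply aux_weighted η ε hη
    · have h2 := (h0.comp_sub_left t).symm
      simp only [sub_sub_cancel, sub_add_cancel_left] at h2
      refine (h2.mono_set ?_).1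
      rw [huIcc, uIcc_of_le hη.le]
      exact Set.Icc_subset_Icc (by linarith) le_rfl
    · intro u hu
      rw [← intervalIntegral.integral_of_le hu.2, intervalIntegral.integral_comp_sub_left h t]
      exact hflu (t - η) (t - u) (by linarith) (by linarith [hu.2]) (by linarith [hu.1])
  -- assembly
  have hη3 : (0:ℝ) < η ^ 3 := by positivity
  have key : (3 / (2 * η ^ 3)) * (∫ s in (-η)..η, s * f (t + s)) - deriv g t
      = (3 / (2 * η ^ 3)) * ((∫ s in (-η)..η, s * E s)
        + ((∫ s in (-η)..(0:ℝ), s * h (t + s)) + ∫ s in (0:ℝ)..η, s * h (t + s))) := by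
    rw [split1, split2, IP, Ihsplit]
    have : deriv g t = g1 t := rfl
    rw [this]
    field_simp
    ring
  rw [key]
  have hcnn : (0:ℝ) ≤ 3 / (2 * η ^ 3) := by positivity
  calc |(3 / (2 * η ^ 3)) * ((∫ s in (-η)..η, s * E s)
        + ((∫ s in (-η)..(0:ℝ), s * h (t + s)) + ∫ s in (0:ℝ)..η, s * h (t + s)))|
      ≤ (3 / (2 * η ^ 3)) * (K * η ^ 4 * (2 * η) + (ε * η + ε * η)) := by
        rw [abs_mul, abs_of_nonneg hcnn]
        apply mul_le_mul_of_nonneg_left _ hcnn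
        calc |(∫ s in (-η)..η, s * E s)
            + ((∫ s in (-η)..(0:ℝ), s * h (t + s)) + ∫ s in (0:ℝ)..η, s * h (t + s))|
            ≤ |∫ s in (-η)..η, s * E s|
              + (|∫ s in (-η)..(0:ℝ), s * h (t + s)| + |∫ s in (0:ℝ)..η, s * h (t + s)|) :=
              (abs_add_le _ _).trans (by gcongr; exact abs_add_le _ _)
          _ ≤ K * η ^ 4 * (2 * η) + (ε * η + ε * η) := by
              gcongr
    _ = 3 * K * η ^ 2 + 3 * ε / η ^ 2 := by
        field_simp
        ring
end
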